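/- Let n ≥ 3 and g(t) = [[t,0],[1,t⁻¹]] ∈ SL(2,ℂ). With v = e₁e₂^{n−1} ∈ Symⁿℂ² and w = e₁ⁿ + ẽ₂^{n−2} ∈ Symⁿℂ² ⊕ Sym^{n−2}ℂ², one has g(t)·v = t^{1−n}e₂ⁿ + t^{2−n}e₁e₂^{n−1} and g(t)·w = (te₁+e₂)ⁿ + t^{2−n}ẽ₂^{n−2}; consequently t^{n−1} g(t)·(v, w) → (e₂ⁿ, 0) as t → 0, so the limit of g(t)·[(v,w)] in ℙ(V ⊕ W) lies in ℙ(V ⊕ {0}). -/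
import Mathlib


open MvPolynomial Filter

/-- Substitution action of `g(t) = [[t,0],[1,t⁻¹]]`: `e₁ ↦ t e₁ + e₂`, `e₂ ↦ t⁻¹ e₂`. -/
noncomputable def act6 (t : ℂ) : MvPolynomial (Fin 2) ℂ → MvPolynomial (Fin 2) ℂ :=
  MvPolynomial.aeval (fun i : Fin 2 => if i = 0 then C t * X 0 + X 1 else C t⁻¹ * X 1)


lemma zp1 (n : ℕ) (hn : 1 ≤ n) (t : ℂ) (ht : t ≠ 0) :
    t ^ ((1 : ℤ) - n) = (t⁻¹) ^ (n - 1) := by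
  have h : (1 : ℤ) - n = -((n - 1 : ℕ) : ℤ) := by omega
  rw [h, zpow_neg, zpow_natCast, inv_pow]

lemma zp2 (n : ℕ) (hn : 2 ≤ n) (t : ℂ) (ht : t ≠ 0) :
    t ^ ((2 : ℤ) - n) = (t⁻¹) ^ (n - 2) := by
  have h : (2 : ℤ) - n = -((n - 2 : ℕ) : ℤ) := by omega
  rw [h, zpow_neg, zpow_natCast, inv_pow]

lemma zp2' (n : ℕ) (hn : 1 ≤ n) (t : ℂ) (ht : t ≠ 0) :
    t ^ ((2 : ℤ) - n) = t * (t⁻¹) ^ (n - 1) := by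
  have h : (2 : ℤ) - n = 1 + -((n - 1 : ℕ) : ℤ) := by omega
  rw [h, zpow_add₀ ht, zpow_one, zpow_neg, zpow_natCast, inv_pow]

lemma zm1 (n : ℕ) (hn : 1 ≤ n) (t : ℂ) (ht : t ≠ 0) :
    t ^ (n - 1) * t ^ ((1 : ℤ) - n) = 1 := by
  rw [zp1 n hn t ht, inv_pow, mul_inv_eq_one₀ (pow_ne_zero _ ht)]

lemma zm2 (n : ℕ) (hn : 1 ≤ n) (t : ℂ) (ht : t ≠ 0) :
    t ^ (n - 1) * t ^ ((2 : ℤ) - n) = t := by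
  rw [zp2' n hn t ht, inv_pow, ← mul_assoc, mul_comm (t ^ (n-1)) t, mul_assoc,
    mul_inv_cancel₀ (pow_ne_zero _ ht), mul_one]

lemma act6_v (n : ℕ) (hn : 1 ≤ n) (t : ℂ) (ht : t ≠ 0) :
    act6 t ((X 0 : MvPolynomial (Fin 2) ℂ) * X 1 ^ (n - 1)) =
      C (t ^ ((1 : ℤ) - n)) * X 1 ^ n + C (t ^ ((2 : ℤ) - n)) * X 0 * X 1 ^ (n - 1) := by
  obtain ⟨m, rfl⟩ : ∃ m, n = m + 1 := ⟨n - 1, by omega⟩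
  rw [zp1 _ hn t ht, zp2' _ hn t ht]
  simp only [act6, map_mul, map_pow, aeval_X, Nat.add_sub_cancel, map_one]
  norm_num
  ring

lemma Cmul2 (a b : ℂ) (p : MvPolynomial (Fin 2) ℂ) : C a * (C b * p) = C (a * b) * p := by
  rw [map_mul]; ring

lemma Cmul3 (a b : ℂ) (p q : MvPolynomial (Fin 2) ℂ) : C a * (C b * p * q) = C (a * b) * (p * q) := by
  rw [map_mul]; ring

lemma act6_w1 (n : ℕ) (t : ℂ) :
    act6 t ((X 0 : MvPolynomial (Fin 2) ℂ) ^ n) = (C t * X 0 + X 1) ^ n := by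
  simp [act6]

lemma act6_w2 (n : ℕ) (hn : 2 ≤ n) (t : ℂ) (ht : t ≠ 0) :
    act6 t ((X 1 : MvPolynomial (Fin 2) ℂ) ^ (n - 2)) =
      C (t ^ ((2 : ℤ) - n)) * X 1 ^ (n - 2) := by
  rw [zp2 n hn t ht]
  simp only [act6, map_pow, aeval_X]
  norm_num [mul_pow, map_pow]

lemma compA (n : ℕ) (hn : 1 ≤ n) (t : ℂ) (ht : t ≠ 0) :
    C (t ^ (n - 1)) * act6 t ((X 0 : MvPolynomial (Fin 2) ℂ) * X 1 ^ (n - 1)) =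
      X 1 ^ n + C t * (X 0 * X 1 ^ (n - 1)) := by
  rw [act6_v n hn t ht, mul_add, Cmul2, Cmul3, zm1 n hn t ht, zm2 n hn t ht, map_one, one_mul]

lemma compC (n : ℕ) (hn : 2 ≤ n) (t : ℂ) (ht : t ≠ 0) :
    C (t ^ (n - 1)) * act6 t ((X 1 : MvPolynomial (Fin 2) ℂ) ^ (n - 2)) =
      C t * X 1 ^ (n - 2) := by
  rw [act6_w2 n hn t ht, ← mul_assoc, ← map_mul, zm2 n (by omega) t ht]

lemma coeffB (n : ℕ) (t : ℂ) (d : Fin 2 →₀ ℕ) :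
    MvPolynomial.coeff d (C (t ^ (n - 1)) * act6 t ((X 0 : MvPolynomial (Fin 2) ℂ) ^ n)) =
      t ^ (n - 1) * ∑ k ∈ Finset.range (n + 1),
        t ^ k * (n.choose k : ℂ) * MvPolynomial.coeff d ((X 0 : MvPolynomial (Fin 2) ℂ) ^ k * X 1 ^ (n - k)) := by
  rw [act6_w1, coeff_C_mul, add_pow, coeff_sum]
  congr 1
  refine Finset.sum_congr rfl fun k _ => ?_
  have h : ((C t * X 0 : MvPolynomial (Fin 2) ℂ) ^ k * X 1 ^ (n - k) * (n.choose k : MvPolynomial (Fin 2) ℂ)) =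
      C (t ^ k * (n.choose k : ℂ)) * (X 0 ^ k * X 1 ^ (n - k)) := by
    rw [show ((n.choose k : MvPolynomial (Fin 2) ℂ)) = C ((n.choose k : ℂ)) by simp,
      map_mul, map_pow]
    ring
  rw [h, coeff_C_mul]

/-- For `n ≥ 3`, `g(t) = [[t,0],[1,t⁻¹]]`, `v = e₁e₂^{n−1}` and `w = e₁ⁿ + ẽ₂^{n−2}`:
`g(t)·v = t^{1−n}e₂ⁿ + t^{2−n}e₁e₂^{n−1}`, `g(t)·w = (te₁+e₂)ⁿ + t^{2−n}ẽ₂^{n−2}`, and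
(coefficientwise) `t^{n−1} g(t)·(v,w) → (e₂ⁿ, 0)` as `t → 0`, i.e. the limit of
`g(t)·[(v,w)]` in `ℙ(V ⊕ W)` lies in `ℙ(V ⊕ {0})`. -/
theorem stmt6 (n : ℕ) (hn : 3 ≤ n) :
    (∀ t : ℂ, t ≠ 0 →
      act6 t ((X 0 : MvPolynomial (Fin 2) ℂ) * X 1 ^ (n - 1)) =
        C (t ^ ((1 : ℤ) - n)) * X 1 ^ n + C (t ^ ((2 : ℤ) - n)) * X 0 * X 1 ^ (n - 1)) ∧
    (∀ t : ℂ, t ≠ 0 →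
      act6 t ((X 0 : MvPolynomial (Fin 2) ℂ) ^ n) = (C t * X 0 + X 1) ^ n ∧
      act6 t ((X 1 : MvPolynomial (Fin 2) ℂ) ^ (n - 2)) =
        C (t ^ ((2 : ℤ) - n)) * X 1 ^ (n - 2)) ∧
    Tendsto
      (fun t : ℂ =>
        ((fun d : Fin 2 →₀ ℕ =>
            MvPolynomial.coeff d (C (t ^ (n - 1)) * act6 t ((X 0 : MvPolynomial (Fin 2) ℂ) * X 1 ^ (n - 1)))),
         (fun d : Fin 2 →₀ ℕ =>
            MvPolynomial.coeff d (C (t ^ (n - 1)) * act6 t ((X 0 : MvPolynomial (Fin 2) ℂ) ^ n))),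
         (fun d : Fin 2 →₀ ℕ =>
            MvPolynomial.coeff d (C (t ^ (n - 1)) * act6 t ((X 1 : MvPolynomial (Fin 2) ℂ) ^ (n - 2))))))
      (nhdsWithin 0 {t : ℂ | t ≠ 0})
      (nhds ((fun d : Fin 2 →₀ ℕ => MvPolynomial.coeff d ((X 1 : MvPolynomial (Fin 2) ℂ) ^ n)),
             (fun _ : Fin 2 →₀ ℕ => (0 : ℂ)),
             (fun _ : Fin 2 →₀ ℕ => (0 : ℂ)))) := by
  refine ⟨fun t ht => act6_v n (by omega) t ht,
    fun t ht => ⟨act6_w1 n t, act6_w2 n (by omega) t ht⟩, ?_⟩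
  have hmem : {t : ℂ | t ≠ 0} ∈ nhdsWithin (0 : ℂ) {t : ℂ | t ≠ 0} := self_mem_nhdsWithin
  refine Tendsto.prodMk_nhds ?_ (Tendsto.prodMk_nhds ?_ ?_)
  · -- component A
    apply Tendsto.congr' (f₁ := fun t : ℂ => fun d : Fin 2 →₀ ℕ =>
      MvPolynomial.coeff d ((X 1 : MvPolynomial (Fin 2) ℂ) ^ n) +
        t * MvPolynomial.coeff d ((X 0 : MvPolynomial (Fin 2) ℂ) * X 1 ^ (n - 1)))
    · filter_upwards [hmem] with t ht
      funext d
      rw [compA n (by omega) t ht, coeff_add, coeff_C_mul]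
    · refine tendsto_pi_nhds.2 fun d => ?_
      have h : Tendsto (fun t : ℂ => MvPolynomial.coeff d ((X 1 : MvPolynomial (Fin 2) ℂ) ^ n) +
          t * MvPolynomial.coeff d ((X 0 : MvPolynomial (Fin 2) ℂ) * X 1 ^ (n - 1)))
          (nhds 0) (nhds (MvPolynomial.coeff d ((X 1 : MvPolynomial (Fin 2) ℂ) ^ n))) := by
        have hc : Continuous (fun t : ℂ => MvPolynomial.coeff d ((X 1 : MvPolynomial (Fin 2) ℂ) ^ n) +
            t * MvPolynomial.coeff d ((X 0 : MvPolynomial (Fin 2) ℂ) * X 1 ^ (n - 1))) :=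
          continuous_const.add (continuous_id.mul continuous_const)
        simpa using hc.tendsto (0 : ℂ)
      exact h.mono_left nhdsWithin_le_nhds
  · -- component B
    refine tendsto_pi_nhds.2 fun d => ?_
    simp only [coeffB]
    have hc : Continuous (fun t : ℂ => t ^ (n - 1) * ∑ k ∈ Finset.range (n + 1),
        t ^ k * (n.choose k : ℂ) * MvPolynomial.coeff d ((X 0 : MvPolynomial (Fin 2) ℂ) ^ k * X 1 ^ (n - k))) :=
      (continuous_pow _).mul (continuous_finset_sum _ fun k _ =>
        ((continuous_pow k).mul continuous_const).mul continuous_const)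
    have h := hc.tendsto (0 : ℂ)
    have h0 : (0 : ℂ) ^ (n - 1) * ∑ k ∈ Finset.range (n + 1),
        (0 : ℂ) ^ k * (n.choose k : ℂ) * MvPolynomial.coeff d ((X 0 : MvPolynomial (Fin 2) ℂ) ^ k * X 1 ^ (n - k)) = 0 := by
      rw [zero_pow (by omega : n - 1 ≠ 0), zero_mul]
    rw [h0] at h
    exact h.mono_left nhdsWithin_le_nhds
  · -- component C
    apply Tendsto.congr' (f₁ := fun t : ℂ => fun d : Fin 2 →₀ ℕ =>
      t * MvPolynomial.coeff d ((X 1 : MvPolynomial (Fin 2) ℂ) ^ (n - 2)))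
    · filter_upwards [hmem] with t ht
      funext d
      rw [compC n (by omega) t ht, coeff_C_mul]
    · refine tendsto_pi_nhds.2 fun d => ?_
      have h : Tendsto (fun t : ℂ => t * MvPolynomial.coeff d ((X 1 : MvPolynomial (Fin 2) ℂ) ^ (n - 2)))
          (nhds 0) (nhds 0) := by
        have hc : Continuous (fun t : ℂ =>
            t * MvPolynomial.coeff d ((X 1 : MvPolynomial (Fin 2) ℂ) ^ (n - 2))) :=
          continuous_id.mul continuous_const
        simpa using hc.tendsto (0 : ℂ)
      exact h.mono_left nhdsWithin_le_nhds
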